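/- arXiv:2605.11908 — 8 statements merged into one kernel-verified Lean document; each statement's English description precedes it below -/
import Mathlib

section
/- Polynomial suppression of harmful arms: if U ≤ −Δ/2 for some Δ > 0, η > 0, and π ∈ (0,1], then σ(U·(−log π)/η)·π ≤ π^(1 + Δ/(2η)). -/
/-! `σ(x) ≤ eˣ`, and for a harmful arm `x = U·(−log π)/η ≤ (Δ/(2η))·log π` because
`−log π ≥ 0`; hence `σ(x) ≤ π^(Δ/(2η))`, and multiplying by `π` gives the bound. -/

lemma Real.sigmoid_le_exp (x : ℝ) : Real.sigmoid x ≤ Real.exp x := by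
  rw [Real.sigmoid_def, ← inv_inv (Real.exp x), ← Real.exp_neg]
  exact inv_anti₀ (Real.exp_pos _) (le_add_of_nonneg_left zero_le_one)

lemma Real.exp_mul_neg_log_div_le_rpow {U a p η : ℝ} (hU : U ≤ -a) (hp0 : 0 < p) (hp1 : p ≤ 1)
    (hη : 0 < η) : Real.exp (U * -Real.log p / η) ≤ p ^ (a / η) := by
  have hlog : 0 ≤ -Real.log p := neg_nonneg.mpr (Real.log_nonpos hp0.le hp1)
  rw [Real.rpow_def_of_pos hp0, Real.exp_le_exp, mul_div_assoc', div_le_div_iff_of_pos_right hη]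
  linarith [mul_le_mul_of_nonneg_right hU hlog]

theorem polynomial_suppression_general (U π η Δ : ℝ) (hU : U ≤ -Δ/2)
    (hπ0 : 0 < π) (hπ1 : π ≤ 1) (hη : 0 < η) :
    (1 / (1 + Real.exp (-(U * (-Real.log π) / η)))) * π
      ≤ π ^ (1 + Δ / (2 * η)) := by
  have hσ : Real.sigmoid (U * -Real.log π / η) ≤ π ^ (Δ / (2 * η)) := by
    rw [← div_div]
    exact (Real.sigmoid_le_exp _).trans
      (Real.exp_mul_neg_log_div_le_rpow (hU.trans_eq (neg_div 2 Δ)) hπ0 hπ1 hη)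
  calc 1 / (1 + Real.exp (-(U * -Real.log π / η))) * π ≤ π ^ (Δ / (2 * η)) * π :=
        mul_le_mul_of_nonneg_right (by rwa [one_div, ← Real.sigmoid_def]) hπ0.le
    _ = π ^ (1 + Δ / (2 * η)) := by rw [Real.rpow_add hπ0, Real.rpow_one, mul_comm]

/-- Polynomial suppression of harmful arms:
if `U ≤ -Δ/2` with `Δ > 0`, `η > 0`, `π ∈ (0,1]`, then
`σ(U·(−log π)/η)·π ≤ π^(1 + Δ/(2η))`. -/
theorem polynomial_suppression (U π η Δ : ℝ) (hΔ : 0 < Δ) (hU : U ≤ -Δ/2)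
    (hπ0 : 0 < π) (hπ1 : π ≤ 1) (hη : 0 < η) :
    (1 / (1 + Real.exp (-(U * (-Real.log π) / η)))) * π
      ≤ π ^ (1 + Δ / (2 * η)) :=
  polynomial_suppression_general U π η Δ hU hπ0 hπ1 hη
end

section
/- Covariance identity for exponential reweighting: for a policy π on Fin K with ∑_i π(i)·U(i) = 0, gated advantage f(i) = max(U(i), 0), step size η > 0, new policy π'(i) = π(i)·exp(η·f(i))/Z with Z = ∑_j π(j)·exp(η·f(j)), the value change satisfies ∑_i (π'(i) − π(i))·r(i) = (1/Z)·∑_{i : U(i)>0} π(i)·U(i)·(exp(η·U(i)) − 1). -/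
/-!
Since the new policy is again a probability vector, the value change `∑ (π' - π) r` equals the
`π'`-average of the advantage `U`. Writing `π' = π e^{η f} / Z`, on `{U ≤ 0}` the factor
`e^{η f}` is `1`, so `Z · ∑ π' U = ∑ π U + ∑_{U > 0} π U (e^{ηU} - 1)`, and `∑ π U = 0`.
-/

open Finset

theorem Real.exp_mul_max_zero_mul_self (η u : ℝ) :
    Real.exp (η * max u 0) * u = u + if 0 < u then u * (Real.exp (η * u) - 1) else 0 := by
  split_ifs with hu
  · rw [max_eq_left hu.le]; ring
  · rw [max_eq_right (not_lt.mp hu), mul_zero, exp_zero, one_mul, add_zero]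

namespace Finset

variable {ι : Type*} [Fintype ι]

theorem sum_sub_mul_eq_sum_mul_sub_sum_mul {p q : ι → ℝ} (hq : ∑ i, q i = 1) (r : ι → ℝ) :
    ∑ i, (q i - p i) * r i = ∑ i, q i * (r i - ∑ j, p j * r j) := by
  simp only [sub_mul, mul_sub, sum_sub_distrib, ← sum_mul, hq, one_mul]

theorem sum_mul_sub_sum_mul_eq_zero {p : ι → ℝ} (hp : ∑ i, p i = 1) (r : ι → ℝ) :
    ∑ i, p i * (r i - ∑ j, p j * r j) = 0 := by
  simpa using (sum_sub_mul_eq_sum_mul_sub_sum_mul (p := p) hp r).symm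

theorem sum_div_sum_self {w : ι → ℝ} (hw : ∑ i, w i ≠ 0) : ∑ i, w i / ∑ j, w j = 1 := by
  rw [← sum_div, div_self hw]

theorem sum_mul_exp_mul_max_zero_mul_eq {p U : ι → ℝ}
    (hU : ∑ i, p i * U i = 0) (η : ℝ) :
    ∑ i, p i * Real.exp (η * max (U i) 0) * U i
      = ∑ i ∈ univ.filter (fun i => 0 < U i), p i * U i * (Real.exp (η * U i) - 1) := by
  simp_rw [mul_assoc, Real.exp_mul_max_zero_mul_self, mul_add, sum_add_distrib, hU, zero_add,
    sum_filter, mul_ite, mul_zero]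

end Finset

open Finset in
theorem eg_covariance_identity_general (K : ℕ) (r π : Fin K → ℝ) (η : ℝ)
    (hπ : ∀ i, 0 < π i) (hsum : ∑ i, π i = 1)
    (U : Fin K → ℝ) (hU : ∀ i, U i = r i - ∑ j, π j * r j)
    (f : Fin K → ℝ) (hf : ∀ i, f i = max (U i) 0)
    (Z : ℝ) (hZ : Z = ∑ j, π j * Real.exp (η * f j))
    (π' : Fin K → ℝ) (hπ' : ∀ i, π' i = π i * Real.exp (η * f i) / Z) :
    ∑ i, (π' i - π i) * r i
      = (1 / Z) * ∑ i ∈ univ.filter (fun i => 0 < U i),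
          π i * U i * (Real.exp (η * U i) - 1) := by
  have hne : (univ : Finset (Fin K)).Nonempty :=
    nonempty_of_sum_ne_zero (hsum ▸ one_ne_zero)
  have hZ_pos : 0 < Z := hZ ▸ sum_pos (fun i _ => mul_pos (hπ i) (Real.exp_pos _)) hne
  have hπ'_sum : ∑ i, π' i = 1 := by
    simp only [hπ', hZ]
    exact sum_div_sum_self (hZ ▸ hZ_pos.ne')
  have hU_mean : ∑ i, π i * U i = 0 := by
    simp only [hU]
    exact sum_mul_sub_sum_mul_eq_zero hsum r
  calc ∑ i, (π' i - π i) * r i = ∑ i, π' i * U i := by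
        simp only [sum_sub_mul_eq_sum_mul_sub_sum_mul hπ'_sum, hU]
    _ = (1 / Z) * ∑ i, π i * Real.exp (η * max (U i) 0) * U i := by
        rw [mul_sum]
        refine sum_congr rfl fun i _ => ?_
        rw [hπ', hf]
        ring
    _ = _ := by rw [sum_mul_exp_mul_max_zero_mul_eq hU_mean]

open Finset in
/-- Covariance identity for the EG exponential reweighting. -/
theorem eg_covariance_identity (K : ℕ) (r π : Fin K → ℝ) (η : ℝ) (hη : 0 < η)
    (hπ : ∀ i, 0 < π i) (hsum : ∑ i, π i = 1)
    (U : Fin K → ℝ) (hU : ∀ i, U i = r i - ∑ j, π j * r j)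
    (f : Fin K → ℝ) (hf : ∀ i, f i = max (U i) 0)
    (Z : ℝ) (hZ : Z = ∑ j, π j * Real.exp (η * f j))
    (π' : Fin K → ℝ) (hπ' : ∀ i, π' i = π i * Real.exp (η * f i) / Z) :
    ∑ i, (π' i - π i) * r i
      = (1 / Z) * ∑ i ∈ univ.filter (fun i => 0 < U i),
          π i * U i * (Real.exp (η * U i) - 1) :=
  eg_covariance_identity_general K r π η hπ hsum U hU f hf Z hZ π' hπ'
end

section
/- Discrete monotonicity of EG in bandits: under the EG update π'(i) = π(i)·exp(η·max(U(i),0))/Z, the expected reward is non-decreasing: ∑_i π'(i)·r(i) ≥ ∑_i π(i)·r(i), for any η > 0. -/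
/-!
Write `U i = r i - m` with `m = ∑ j, π j * r j` and `w i = exp (η * max (U i) 0)`. Since
`∑ i, π i * U i = 0`, the gain `Z * (∑ i, π' i * r i - m) = ∑ i, π i * w i * U i` equals
`∑ i, π i * (w i - 1) * U i`, and every term is nonnegative: `w i = 1` when `U i ≤ 0`, while
`w i ≥ 1` when `U i > 0`.
-/

open Finset

theorem sum_mul_sub_sum_mul_eq_zero {ι : Type*} [Fintype ι] (π r : ι → ℝ) (hsum : ∑ i, π i = 1) :
    ∑ i, π i * (r i - ∑ j, π j * r j) = 0 := by
  simp only [mul_sub, sum_sub_distrib, ← sum_mul, hsum, one_mul, sub_self]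

theorem sum_mul_le_sum_reweight_mul {ι : Type*} [Fintype ι] (π w r : ι → ℝ)
    (hπ : ∀ i, 0 ≤ π i) (hsum : ∑ i, π i = 1) (hw : ∀ i, 0 < w i)
    (hwr : ∀ i, 0 ≤ (w i - 1) * (r i - ∑ j, π j * r j)) :
    ∑ i, π i * r i ≤ ∑ i, π i * w i / (∑ j, π j * w j) * r i := by
  set m := ∑ j, π j * r j
  have hZ : 0 < ∑ j, π j * w j := by
    obtain ⟨i, -, hi⟩ : ∃ i ∈ univ, 0 < π i :=
      exists_lt_of_sum_lt (by simp [hsum] : ∑ _i : ι, (0 : ℝ) < ∑ i, π i)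
    exact sum_pos' (fun j _ => mul_nonneg (hπ j) (hw j).le) ⟨i, mem_univ i, mul_pos hi (hw i)⟩
  have hgain : ∑ i, π i * w i * r i - (∑ j, π j * w j) * m
      = ∑ i, π i * ((w i - 1) * (r i - m)) := by
    calc ∑ i, π i * w i * r i - (∑ j, π j * w j) * m
        = ∑ i, (π i * ((w i - 1) * (r i - m)) + π i * (r i - m)) := by
          rw [sum_mul, ← sum_sub_distrib]
          exact sum_congr rfl fun i _ => by ring
      _ = ∑ i, π i * ((w i - 1) * (r i - m)) := by
          rw [sum_add_distrib, sum_mul_sub_sum_mul_eq_zero π r hsum, add_zero]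
  have hnonneg : 0 ≤ ∑ i, π i * ((w i - 1) * (r i - m)) :=
    sum_nonneg fun i _ => mul_nonneg (hπ i) (hwr i)
  simp only [div_mul_eq_mul_div, ← sum_div]
  rw [le_div_iff₀ hZ]
  linarith

theorem exp_mul_max_zero_sub_one_mul_nonneg {η : ℝ} (hη : 0 ≤ η) (u : ℝ) :
    0 ≤ (Real.exp (η * max u 0) - 1) * u := by
  rcases le_or_gt u 0 with hu | hu
  · simp [max_eq_right hu]
  · rw [max_eq_left hu.le]
    exact mul_nonneg (sub_nonneg.mpr (Real.one_le_exp (mul_nonneg hη hu.le))) hu.le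

/-- Discrete monotonicity of EG in bandits. -/
theorem eg_monotonic (K : ℕ) (r π : Fin K → ℝ) (η : ℝ) (hη : 0 < η)
    (hπ : ∀ i, 0 < π i) (hsum : ∑ i, π i = 1)
    (U : Fin K → ℝ) (hU : ∀ i, U i = r i - ∑ j, π j * r j)
    (Z : ℝ) (hZ : Z = ∑ j, π j * Real.exp (η * max (U j) 0))
    (π' : Fin K → ℝ) (hπ' : ∀ i, π' i = π i * Real.exp (η * max (U i) 0) / Z) :
    ∑ i, π i * r i ≤ ∑ i, π' i * r i := by
  have hwr (i : Fin K) : 0 ≤ (Real.exp (η * max (U i) 0) - 1) * (r i - ∑ j, π j * r j) :=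
    hU i ▸ exp_mul_max_zero_sub_one_mul_nonneg hη.le (U i)
  calc ∑ i, π i * r i
      ≤ ∑ i, π i * Real.exp (η * max (U i) 0) / (∑ j, π j * Real.exp (η * max (U j) 0)) * r i :=
        sum_mul_le_sum_reweight_mul π _ r (fun i => (hπ i).le) hsum (fun _ => Real.exp_pos _) hwr
    _ = ∑ i, π' i * r i := by simp only [hπ', hZ]
end

section
/- Sign-preserving monotonicity of DG: let w : Fin K → ℝ satisfy w(i) > 0 for all i, set g(i) = α·w(i)·U(i) with α > 0, and π'(i) = π(i)·exp(g(i))/Z with Z = ∑_j π(j)·exp(g(j)). Then ∑_i π'(i)·r(i) ≥ ∑_i π(i)·r(i), since each term π(i)·U(i)·(exp(g(i)) − 1) is non-negative. -/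
/-!
Because `∑ π(i) U(i) = 0`, the gain `Z·(∑ π' r − ∑ π r)` equals the weighted covariance
`∑ π(i) U(i) (exp g(i) − 1)` of the reward and the reweighting factor. Each of its terms is
non-negative because `g(i)` has the sign of `U(i)`, and `Z > 0`.
-/

open Finset

theorem mul_exp_mul_sub_one_nonneg {c : ℝ} (hc : 0 ≤ c) (x : ℝ) :
    0 ≤ x * (Real.exp (c * x) - 1) := by
  rcases le_total 0 x with hx | hx
  · exact mul_nonneg hx (sub_nonneg.2 (Real.one_le_exp (mul_nonneg hc hx)))
  · exact mul_nonneg_of_nonpos_of_nonpos hx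
      (sub_nonpos.2 (Real.exp_le_one_iff.2 (mul_nonpos_of_nonneg_of_nonpos hc hx)))

section Reweighting

variable {ι : Type*} [Fintype ι] (p r f : ι → ℝ)

theorem sum_mul_sub_mean_mul_sub_eq (hp : ∑ i, p i = 1) (c : ℝ) :
    ∑ i, p i * (r i - ∑ j, p j * r j) * (f i - c) =
      ∑ i, p i * f i * r i - (∑ i, p i * f i) * ∑ j, p j * r j := by
  set m := ∑ j, p j * r j
  have expand : ∀ i, p i * (r i - m) * (f i - c) =
      p i * f i * r i - m * (p i * f i) - c * (p i * r i) + c * m * p i := fun i => by ring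
  simp only [expand, sum_add_distrib, sum_sub_distrib, ← mul_sum, hp]
  ring

theorem sum_mul_le_sum_reweighted_mul (hp : ∀ i, 0 ≤ p i) (hp1 : ∑ i, p i = 1)
    (hf : ∀ i, 0 < f i) (hcov : ∀ i, 0 ≤ p i * (r i - ∑ j, p j * r j) * (f i - 1)) :
    ∑ i, p i * r i ≤ ∑ i, p i * f i / (∑ j, p j * f j) * r i := by
  obtain ⟨k, -, hk⟩ := exists_ne_zero_of_sum_ne_zero (hp1 ▸ one_ne_zero : ∑ i, p i ≠ 0)
  have hZ : 0 < ∑ j, p j * f j :=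
    sum_pos' (fun i _ => mul_nonneg (hp i) (hf i).le)
      ⟨k, mem_univ k, mul_pos ((hp k).lt_of_ne' hk) (hf k)⟩
  simp only [div_mul_eq_mul_div, ← sum_div]
  rw [le_div_iff₀ hZ]
  have hcov_sum := sum_nonneg fun i (_ : i ∈ univ) => hcov i
  rw [sum_mul_sub_mean_mul_sub_eq p r f hp1] at hcov_sum
  linarith

end Reweighting

/-- Sign-preserving monotonicity of DG: with strictly positive
gate weights `w` and step size `α > 0`, the exponential reweighting
`π'(i) = π(i)·exp(α·w(i)·U(i))/Z` does not decrease the expected reward,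
and each term `π(i)·U(i)·(exp(g(i)) − 1)` is non-negative. -/
theorem dg_monotonic (K : ℕ) (r π w : Fin K → ℝ) (α : ℝ) (hα : 0 < α)
    (hπ : ∀ i, 0 < π i) (hsum : ∑ i, π i = 1) (hw : ∀ i, 0 < w i)
    (U : Fin K → ℝ) (hU : ∀ i, U i = r i - ∑ j, π j * r j)
    (g : Fin K → ℝ) (hg : ∀ i, g i = α * w i * U i)
    (Z : ℝ) (hZ : Z = ∑ j, π j * Real.exp (g j))
    (π' : Fin K → ℝ) (hπ' : ∀ i, π' i = π i * Real.exp (g i) / Z) :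
    (∀ i, 0 ≤ π i * U i * (Real.exp (g i) - 1)) ∧
      ∑ i, π i * r i ≤ ∑ i, π' i * r i := by
  have hterm : ∀ i, 0 ≤ π i * U i * (Real.exp (g i) - 1) := fun i => by
    rw [mul_assoc, hg]
    exact mul_nonneg (hπ i).le
      (mul_exp_mul_sub_one_nonneg (mul_nonneg hα.le (hw i).le) (U i))
  refine ⟨hterm, ?_⟩
  simp only [hπ', hZ]
  exact sum_mul_le_sum_reweighted_mul π r (fun i => Real.exp (g i)) (fun i => (hπ i).le) hsum
    (fun i => Real.exp_pos _) (fun i => hU i ▸ hterm i)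
end

section
/- EG sector bound (general K): fix a sub-optimal corner arm j ≠ 1 in a K-armed bandit with r(1) > r(j). Write ε = 1 − π(j) and suppose π(1) ≥ ε/K. There exists ε₀ > 0, depending only on the reward gaps and K, such that for all ε ∈ (0, ε₀), the EG drift difference satisfies ϑ(1) − ϑ(j) ≥ (r(1)−r(j))·ε/(4K), where ϑ(a) = ∑_{i : U(i)>0} π(i)·U(i)·(𝟙{a=i} − π(a)). -/
/-!
Write `U⁺ = max U 0`. The EG drift is `ϑ(a) = π(a) (U⁺(a) − 𝔼_π U⁺)`, so for the best arm `1`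
and the heavy arm `j`, `ϑ(1) − ϑ(j) ≥ π(1) U(1) − (ε + π(1)) U⁺(j)` because the mean `𝔼_π U⁺`
is weighted by `π(j) − π(1) ≥ 0` and dominates `π(j) U⁺(j)`. Near the corner `j` the best arm has
advantage `U(1) ≥ π(j) (r(1) − r(j)) = (1 − ε) Δ` while `U(j) ≤ ε`, and `π(1) ≤ ε`; with
`π(1) ≥ ε / K` the gap is at least `ε (1 − ε) Δ / K − 2 ε²`, which beats `Δ ε / (4 K)` once
`ε < Δ / (8 K)`.
-/

open Finset

/-- Advantage of arm `i` under policy `π` with rewards `r`. -/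
def banditAdv {K : ℕ} (r π : Fin K → ℝ) (i : Fin K) : ℝ :=
  r i - ∑ m, π m * r m

/-- EG drift: gated policy-gradient drift with weights `𝟙{U(i) > 0}`. -/
noncomputable def egDrift {K : ℕ} (r π : Fin K → ℝ) (a : Fin K) : ℝ :=
  ∑ i ∈ univ.filter (fun i => 0 < banditAdv r π i),
    π i * banditAdv r π i * ((if a = i then (1:ℝ) else 0) - π a)

variable {K : ℕ} {r π : Fin K → ℝ}

lemma le_one_sub_of_ne {a b : Fin K} (hπ : ∀ i, 0 ≤ π i) (hπ1 : ∑ i, π i = 1) (hab : a ≠ b) :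
    π a ≤ 1 - π b := by
  linarith [add_le_sum (fun i _ => hπ i) (mem_univ a) (mem_univ b) hab]

lemma banditAdv_eq_sum_mul_sub (hπ1 : ∑ i, π i = 1) (a : Fin K) :
    banditAdv r π a = ∑ m, π m * (r a - r m) := by
  simp only [banditAdv, mul_sub, sum_sub_distrib, ← sum_mul, hπ1, one_mul]

lemma banditAdv_le_mul (hr : ∀ i, 0 ≤ r i) (hπ : ∀ i, 0 ≤ π i) (b : Fin K) :
    banditAdv r π b ≤ (1 - π b) * r b := by
  have : π b * r b ≤ ∑ m, π m * r m :=
    single_le_sum (f := fun m => π m * r m) (fun i _ => mul_nonneg (hπ i) (hr i)) (mem_univ b)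
  rw [banditAdv]
  linarith

lemma mul_sub_le_banditAdv_of_forall_le {a : Fin K} (hπ : ∀ i, 0 ≤ π i) (hπ1 : ∑ i, π i = 1)
    (ha : ∀ m, r m ≤ r a) (b : Fin K) :
    π b * (r a - r b) ≤ banditAdv r π a := by
  rw [banditAdv_eq_sum_mul_sub hπ1]
  exact single_le_sum (f := fun m => π m * (r a - r m))
    (fun m _ => mul_nonneg (hπ m) (sub_nonneg.2 (ha m))) (mem_univ b)

lemma egDrift_eq_mul_sub (a : Fin K) :
    egDrift r π a = π a * (max (banditAdv r π a) 0 - ∑ i, π i * max (banditAdv r π i) 0) := by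
  have hgate : ∀ i, (if 0 < banditAdv r π i then
      π i * banditAdv r π i * ((if a = i then (1 : ℝ) else 0) - π a) else 0) =
      π i * max (banditAdv r π i) 0 * ((if a = i then (1 : ℝ) else 0) - π a) := by
    intro i
    by_cases h : 0 < banditAdv r π i
    · rw [if_pos h, max_eq_left h.le]
    · rw [if_neg h, max_eq_right (not_lt.1 h)]; ring
  rw [egDrift, sum_filter, sum_congr rfl fun i _ => hgate i]
  simp only [mul_sub, sum_sub_distrib, mul_ite, mul_one, mul_zero, sum_ite_eq, mem_univ, if_true,
    ← sum_mul]
  ring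

lemma egDrift_sub_egDrift_ge {a b : Fin K} (hπ : ∀ i, 0 ≤ π i) (hab : π a ≤ π b)
    (hb : π b ≤ 1) :
    π a * banditAdv r π a - (1 - π b + π a) * max (banditAdv r π b) 0 ≤
      egDrift r π a - egDrift r π b := by
  set V := fun i => max (banditAdv r π i) 0
  have hV : ∀ i, 0 ≤ V i := fun i => le_max_right _ _
  have hmean : π b * V b ≤ ∑ i, π i * V i :=
    single_le_sum (f := fun i => π i * V i) (fun i _ => mul_nonneg (hπ i) (hV i)) (mem_univ b)
  have hVa : banditAdv r π a ≤ V a := le_max_left _ _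
  rw [egDrift_eq_mul_sub, egDrift_eq_mul_sub]
  nlinarith [mul_le_mul_of_nonneg_left hmean (sub_nonneg.2 hab),
    mul_le_mul_of_nonneg_left hVa (hπ a), mul_nonneg (sub_nonneg.2 hb) (hV b),
    mul_nonneg (hπ a) (hV b)]

/-- EG sector bound (general K). -/
theorem eg_sector_bound (K : ℕ) (hK : 2 ≤ K) (r : Fin K → ℝ)
    (hr01 : ∀ i, r i ∈ Set.Icc (0:ℝ) 1)
    (hr : ∀ i j : Fin K, i < j → r j < r i)
    (j : Fin K) (hj : j ≠ ⟨0, by omega⟩) :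
    ∃ ε₀ > (0:ℝ), ∀ π : Fin K → ℝ, (∀ i, 0 < π i) → (∑ i, π i) = 1 →
      ∀ ε : ℝ, ε = 1 - π j → 0 < ε → ε < ε₀ →
        π ⟨0, by omega⟩ ≥ ε / K →
        egDrift r π ⟨0, by omega⟩ - egDrift r π j
          ≥ (r ⟨0, by omega⟩ - r j) * ε / (4 * K) := by
  set i₀ : Fin K := ⟨0, by omega⟩
  have hi₀_lt : ∀ m, m ≠ i₀ → i₀ < m := fun m hm =>
    Fin.lt_def.2 (Nat.pos_of_ne_zero fun h => hm (Fin.ext h))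
  have hmax : ∀ m, r m ≤ r i₀ := fun m =>
    (eq_or_ne m i₀).elim (fun h => h ▸ le_rfl) fun h => (hr i₀ m (hi₀_lt m h)).le
  set Δ := r i₀ - r j
  have hΔ : 0 < Δ := sub_pos.2 (hr i₀ j (hi₀_lt j hj))
  have hΔ1 : Δ ≤ 1 := by linarith [(hr01 i₀).2, (hr01 j).1]
  have hK2 : (2 : ℝ) ≤ K := by exact_mod_cast hK
  refine ⟨Δ / (8 * K), by positivity, fun π hπ hπ1 ε hε hε0 hεε₀ hπ₀ => ?_⟩
  have hπnn : ∀ i, 0 ≤ π i := fun i => (hπ i).le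
  have hεK : ε * (8 * K) < Δ := (lt_div_iff₀ (by positivity)).1 hεε₀
  have hπ₀ε : π i₀ ≤ ε := hε ▸ le_one_sub_of_ne hπnn hπ1 (Ne.symm hj)
  have hUi₀ : π j * Δ ≤ banditAdv r π i₀ := mul_sub_le_banditAdv_of_forall_le hπnn hπ1 hmax j
  have hUj : max (banditAdv r π j) 0 ≤ ε := max_le (by
    nlinarith [banditAdv_le_mul (fun i => (hr01 i).1) hπnn j, (hr01 j).2]) hε0.le
  have hgap := egDrift_sub_egDrift_ge (r := r) hπnn (a := i₀) (b := j) (by nlinarith) (by linarith)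
  rw [ge_iff_le]
  calc Δ * ε / (4 * K) ≤ ε / K * ((1 - ε) * Δ) - 2 * ε * ε := by
        field_simp
        nlinarith
    _ ≤ π i₀ * banditAdv r π i₀ - (1 - π j + π i₀) * max (banditAdv r π j) 0 := by
        gcongr ?_ - ?_
        · exact mul_le_mul hπ₀ (by rwa [hε, sub_sub_cancel]) (by nlinarith) (hπnn i₀)
        · exact mul_le_mul (by linarith) hUj (le_max_right _ _) (by positivity)
    _ ≤ _ := hgap
end

section
/- EG interior fixed point in the shared-parameter counterexample: with p = σ(θ), the EG drift (keeping only positive-advantage terms, i.e., action a₁ at s₁ and action a₀ at s₂) equals F_EG(θ) = 5·p·(1−p)·(1 − 11p). Its unique root in (0,1) is p* = 1/11, and the derivative of F_EG with respect to p at p = 1/11 equals −50/11 < 0, so p* is a stable fixed point. -/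
/-- EG drift in the shared-parameter counterexample, as a function of
`p = σ(θ)`: keep only the positive-advantage terms
`G_{s₁} = p·10(1−p)·(1−p)` and `G_{s₂} = (1−p)·100p·(−p)`. -/
noncomputable def Feg (p : ℝ) : ℝ :=
  (1/2) * (p * (10 * (1 - p)) * (1 - p) + (1 - p) * (100 * p) * (-p))

open Set

theorem Feg_eq (p : ℝ) : Feg p = 5 * p * (1 - p) * (1 - 11 * p) := by
  unfold Feg; ring

theorem Feg_eq_zero_iff {p : ℝ} (hp : p ∈ Ioo 0 1) : Feg p = 0 ↔ p = 1 / 11 := by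
  have hp₀ : p ≠ 0 := hp.1.ne'
  have hp₁ : 1 - p ≠ 0 := sub_ne_zero.2 hp.2.ne'
  rw [Feg_eq, mul_eq_zero, sub_eq_zero]
  simp only [mul_eq_zero, hp₀, hp₁, OfNat.ofNat_ne_zero, or_self, false_or]
  constructor <;> intro h <;> linarith

theorem hasDerivAt_Feg (p : ℝ) : HasDerivAt Feg (5 - 120 * p + 165 * p ^ 2) p := by
  have hFeg : Feg = fun x => 5 * x - 60 * x ^ 2 + 55 * x ^ 3 :=
    funext fun x => by unfold Feg; ring
  rw [hFeg]
  exact ((((hasDerivAt_id p).const_mul 5).sub ((hasDerivAt_pow 2 p).const_mul 60)).add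
    ((hasDerivAt_pow 3 p).const_mul 55)).congr_deriv (by norm_num; ring)

theorem deriv_Feg_one_div_eleven : deriv Feg (1 / 11) = -50 / 11 := by
  rw [(hasDerivAt_Feg _).deriv]; norm_num

/-- EG interior fixed point in the shared-parameter
counterexample: `F_EG(p) = 5p(1−p)(1−11p)`, whose unique root in `(0,1)` is
`p* = 1/11`, with `F_EG'(1/11) = −50/11 < 0` (stable fixed point). -/
theorem eg_counterexample_fixed_point :
    (∀ p : ℝ, Feg p = 5 * p * (1 - p) * (1 - 11 * p))
    ∧ (∀ p ∈ Set.Ioo (0:ℝ) 1, Feg p = 0 ↔ p = 1/11)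
    ∧ deriv Feg (1/11) = -50/11
    ∧ (-50/11 : ℝ) < 0 :=
  ⟨Feg_eq, fun _ hp => Feg_eq_zero_iff hp, deriv_Feg_one_div_eleven, by norm_num⟩
end

section
/- Corner dominance decomposition for EG: in a K-armed bandit with optimal arm 1 and corner arm j, writing Δ_{ab} = r(a) − r(b), the EG logit-update difference satisfies Δθ(1) − Δθ(j) = Δ_{1j}·C_{1j} + ∑_{k≠1,j} Δ_{jk}·C_{jk}, where C_{1j} = π(1)·[(1−π(1))² + π(j)·(2−π(j))] and C_{jk} = π(k)·(π(1) − π(j))·∑_{m≠1,j} π(m), under the identity Δθ(1) − Δθ(j) = π(1)·U(1)·(1+π(j)−π(1)) − π(j)·U(j)·(1+π(1)−π(j)) with U(1) = (1−π(1))·Δ_{1j} − ∑_{k≠1,j} π(k)·Δ_{kj} and U(j) = −π(1)·Δ_{1j} − ∑_{k≠1,j} π(k)·Δ_{kj}. -/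
open Finset

/-! Writing `S = ∑_{k≠1,j} π(k)·(r(k) − r(j))` for the corner term shared by `U(1)` and `U(j)`,
the logit gap is a polynomial in `π(1)`, `π(j)`, `Δ_{1j}` and `S`. The coefficient of `−S`
factors as `(π(1) − π(j))·(1 − π(1) − π(j))`, and `1 − π(1) − π(j)` is the mass `∑_{m≠1,j} π(m)`
of the remaining arms, which is how `C_{jk}` arises. -/

theorem sum_erase_erase_univ_eq_sub {ι M : Type*} [Fintype ι] [DecidableEq ι] [AddCommGroup M]
    (f : ι → M) {a b : ι} (hab : a ≠ b) :
    ∑ m ∈ (univ.erase a).erase b, f m = ∑ m, f m - f a - f b := by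
  rw [sum_erase_eq_sub (mem_erase.2 ⟨hab.symm, mem_univ b⟩), sum_erase_eq_sub (mem_univ a)]

theorem eg_logit_gap_eq (p1 pj Δ S : ℝ) :
    p1 * ((1 - p1) * Δ - S) * (1 + pj - p1) - pj * (-p1 * Δ - S) * (1 + p1 - pj)
      = Δ * (p1 * ((1 - p1) ^ 2 + pj * (2 - pj))) + (p1 - pj) * (1 - p1 - pj) * -S := by
  ring

/-- Corner dominance decomposition for EG:
`Δθ(1) − Δθ(j) = Δ_{1j}·C_{1j} + ∑_{k≠1,j} Δ_{jk}·C_{jk}`. -/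
theorem corner_dominance_decomposition (K : ℕ) (r π : Fin K → ℝ)
    (a1 j : Fin K) (hne : a1 ≠ j) (hsum : ∑ i, π i = 1) :
    ∀ U1 Uj : ℝ,
      U1 = (1 - π a1) * (r a1 - r j)
            - ∑ k ∈ (univ.erase a1).erase j, π k * (r k - r j) →
      Uj = -(π a1) * (r a1 - r j)
            - ∑ k ∈ (univ.erase a1).erase j, π k * (r k - r j) →
      π a1 * U1 * (1 + π j - π a1) - π j * Uj * (1 + π a1 - π j)
        = (r a1 - r j) * (π a1 * ((1 - π a1) ^ 2 + π j * (2 - π j)))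
          + ∑ k ∈ (univ.erase a1).erase j,
              (r j - r k) *
                (π k * (π a1 - π j) * ∑ m ∈ (univ.erase a1).erase j, π m) := by
  intro U1 Uj hU1 hUj
  set S := ∑ k ∈ (univ.erase a1).erase j, π k * (r k - r j)
  have hmass : ∑ m ∈ (univ.erase a1).erase j, π m = 1 - π a1 - π j := by
    rw [sum_erase_erase_univ_eq_sub π hne, hsum]
  have hcorner : ∑ k ∈ (univ.erase a1).erase j,
      (r j - r k) * (π k * (π a1 - π j) * (1 - π a1 - π j))
        = (π a1 - π j) * (1 - π a1 - π j) * -S := by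
    rw [mul_neg, mul_sum, ← sum_neg_distrib]
    exact sum_congr rfl fun k _ => by ring
  rw [hmass, hcorner, hU1, hUj]
  exact eg_logit_gap_eq _ _ _ _
end

section
/- Performance difference with EG reweighting in MDPs: for a tabular MDP with per-state EG update π'(a|s) = π(a|s)·exp(η·max(U_a(s),0))/Z_s, and given the performance difference lemma V(π') − V(π) = (1/(1−γ))·∑_s d^{π'}(s)·∑_a π'(a|s)·U_a(s), each state's inner sum equals (1/Z_s)·∑_{i : U_i(s)>0} π(i|s)·U_i(s)·(exp(η·U_i(s)) − 1) ≥ 0, hence V(π') ≥ V(π). -/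
/-!
Since `∑ₐ π(a) U(a) = 0`, subtracting `1` from every reweighting factor
`exp (η · max (U a) 0)` leaves `∑ₐ π(a) U(a) exp (η · max (U a) 0)` unchanged, and the
shifted factor vanishes wherever `U a ≤ 0`. The remaining terms
`π(a) U(a) (exp (η U(a)) - 1)` are non-negative because `U` and `exp (η U) - 1` have the same
sign, so every state contributes non-negatively to the performance difference.
-/

section ExponentiatedGradient

open Finset Real

lemma sum_mul_sub_eq_of_sum_eq_zero {ι : Type*} (s : Finset ι) (w f : ι → ℝ) (c : ℝ)
    (hw : ∑ i ∈ s, w i = 0) :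
    ∑ i ∈ s, w i * (f i - c) = ∑ i ∈ s, w i * f i := by
  simp only [mul_sub, sum_sub_distrib, ← sum_mul, hw, zero_mul, sub_zero]

lemma mul_exp_mul_sub_one_nonneg_s17 {η : ℝ} (hη : 0 ≤ η) (u : ℝ) :
    0 ≤ u * (exp (η * u) - 1) := by
  rcases le_total 0 u with hu | hu
  · exact mul_nonneg hu (sub_nonneg.2 (one_le_exp (mul_nonneg hη hu)))
  · exact mul_nonneg_of_nonpos_of_nonpos hu
      (sub_nonpos.2 (exp_le_one_iff.2 (mul_nonpos_of_nonneg_of_nonpos hη hu)))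

lemma sum_mul_exp_mul_max_sub_one_eq_sum_filter {ι : Type*} (s : Finset ι) (w u : ι → ℝ)
    (η : ℝ) :
    ∑ i ∈ s, w i * (exp (η * max (u i) 0) - 1)
      = ∑ i ∈ s with 0 < u i, w i * (exp (η * u i) - 1) := by
  rw [sum_filter]
  refine sum_congr rfl fun i _ => ?_
  split_ifs with hu
  · rw [max_eq_left hu.le]
  · rw [max_eq_right (not_lt.1 hu), mul_zero, exp_zero, sub_self, mul_zero]

variable {A : Type*} [Fintype A] (η Z : ℝ) (p u p' : A → ℝ)

lemma sum_eg_update_mul_eq (hu : ∑ a, p a * u a = 0)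
    (hp' : ∀ a, p' a = p a * exp (η * max (u a) 0) / Z) :
    ∑ a, p' a * u a
      = (1 / Z) * ∑ a ∈ univ with 0 < u a, p a * u a * (exp (η * u a) - 1) := by
  calc ∑ a, p' a * u a = (1 / Z) * ∑ a, p a * u a * exp (η * max (u a) 0) := by
        rw [mul_sum]
        exact sum_congr rfl fun a _ => by rw [hp' a]; ring
    _ = (1 / Z) * ∑ a, p a * u a * (exp (η * max (u a) 0) - 1) := by
        rw [sum_mul_sub_eq_of_sum_eq_zero _ _ _ _ hu]
    _ = _ := by rw [sum_mul_exp_mul_max_sub_one_eq_sum_filter]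

lemma sum_filter_mul_exp_mul_sub_one_nonneg (hη : 0 ≤ η) (hp : ∀ a, 0 ≤ p a) :
    0 ≤ ∑ a ∈ univ with 0 < u a, p a * u a * (exp (η * u a) - 1) :=
  sum_nonneg fun a _ => by
    rw [mul_assoc]
    exact mul_nonneg (hp a) (mul_exp_mul_sub_one_nonneg_s17 hη (u a))

end ExponentiatedGradient

open Finset in
theorem mdp_eg_monotonic_general (S A : Type*) [Fintype S] [Fintype A]
    (γ η : ℝ) (hγ : γ ∈ Set.Ico (0:ℝ) 1) (hη : 0 < η)
    (π : S → A → ℝ) (hπpos : ∀ s a, 0 < π s a)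
    (U : S → A → ℝ) (hU0 : ∀ s, ∑ a, π s a * U s a = 0)
    (Z : S → ℝ) (hZ : ∀ s, Z s = ∑ a, π s a * Real.exp (η * max (U s a) 0))
    (π' : S → A → ℝ)
    (hπ' : ∀ s a, π' s a = π s a * Real.exp (η * max (U s a) 0) / Z s)
    (d : S → ℝ) (hd : ∀ s, 0 ≤ d s)
    (Vdiff : ℝ)
    (hPDL : Vdiff = (1 / (1 - γ)) * ∑ s, d s * ∑ a, π' s a * U s a) :
    (∀ s, ∑ a, π' s a * U s a
        = (1 / Z s) * ∑ a ∈ univ.filter (fun a => 0 < U s a),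
            π s a * U s a * (Real.exp (η * U s a) - 1))
    ∧ 0 ≤ Vdiff := by
  have hinner s := sum_eg_update_mul_eq η (Z s) (π s) (U s) (π' s) (hU0 s) (hπ' s)
  refine ⟨hinner, ?_⟩
  have hZ_nonneg s : 0 ≤ Z s :=
    hZ s ▸ sum_nonneg fun a _ => mul_nonneg (hπpos s a).le (Real.exp_nonneg _)
  have hγ' : 0 < 1 - γ := sub_pos.2 hγ.2
  rw [hPDL]
  refine mul_nonneg (by positivity) (sum_nonneg fun s _ => mul_nonneg (hd s) ?_)
  rw [hinner s]
  exact mul_nonneg (one_div_nonneg.2 (hZ_nonneg s))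
    (sum_filter_mul_exp_mul_sub_one_nonneg η (π s) (U s) hη.le fun a => (hπpos s a).le)

open Finset in
/-- Performance difference with EG reweighting in MDPs:
each state's inner sum in the performance difference lemma equals the
non-negative covariance expression, hence `V(π') ≥ V(π)`. -/
theorem mdp_eg_monotonic (S A : Type*) [Fintype S] [Fintype A]
    (γ η : ℝ) (hγ : γ ∈ Set.Ico (0:ℝ) 1) (hη : 0 < η)
    (π : S → A → ℝ) (hπpos : ∀ s a, 0 < π s a) (hπsum : ∀ s, ∑ a, π s a = 1)
    (U : S → A → ℝ) (hU0 : ∀ s, ∑ a, π s a * U s a = 0)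
    (Z : S → ℝ) (hZ : ∀ s, Z s = ∑ a, π s a * Real.exp (η * max (U s a) 0))
    (π' : S → A → ℝ)
    (hπ' : ∀ s a, π' s a = π s a * Real.exp (η * max (U s a) 0) / Z s)
    (d : S → ℝ) (hd : ∀ s, 0 ≤ d s)
    (Vdiff : ℝ)
    (hPDL : Vdiff = (1 / (1 - γ)) * ∑ s, d s * ∑ a, π' s a * U s a) :
    (∀ s, ∑ a, π' s a * U s a
        = (1 / Z s) * ∑ a ∈ univ.filter (fun a => 0 < U s a),
            π s a * U s a * (Real.exp (η * U s a) - 1))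
    ∧ 0 ≤ Vdiff :=
  mdp_eg_monotonic_general S A γ η hγ hη π hπpos U hU0 Z hZ π' hπ' d hd Vdiff hPDL
end
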